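/- Let x* be segmented by the greedy algorithm into extreme markets {x^{S_l}}_{l=0}^{L} with masses y(x^{S_l}) = α^{l+1} ∏_{j=1}^{l}(1 − α^j). Let T > 0 be the first step with x^T_ī = 0, where v_ī = max{argmax_{v_j > v_{i*}} v_j x̄*_j}. Then sum_{j=0}^{T−1} y(x^{S_j}) = λ̲, where λ̲ = min_{v_j ≤ v_{i*}} [ (v_ī x̄*_ī)/v_j + 1 − x̄*_j ]. -/

import Mathlib

open Finset

/-- Proportion of consumers with valuation ≥ v k. -/
def barSum {K : ℕ} (x : Fin K → ℝ) (k : Fin K) : ℝ := ∑ j ∈ Finset.Ici k, x j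

/-- A market is a probability distribution over the K valuations. -/
def IsMarket {K : ℕ} (x : Fin K → ℝ) : Prop := (∀ i, 0 ≤ x i) ∧ ∑ i, x i = 1

/-- Price v k is optimal for market x. -/
def OptimalPrice {K : ℕ} (v x : Fin K → ℝ) (k : Fin K) : Prop :=
  ∀ i, v i * barSum x i ≤ v k * barSum x k

/-- v k is the largest optimal price for x (tie-breaking against consumers). -/
def LargestOptimal {K : ℕ} (v x : Fin K → ℝ) (k : Fin K) : Prop :=
  OptimalPrice v x k ∧ ∀ j, OptimalPrice v x j → j ≤ k

/-- μ(v i, S): smallest element of S strictly greater than i (junk value i if none). -/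
noncomputable def nextIn {K : ℕ} (S : Finset (Fin K)) (i : Fin K) : Fin K :=
  if h : (S.filter (fun j => i < j)).Nonempty then (S.filter (fun j => i < j)).min' h else i

/-- The extreme market x^S of Bergemann–Brooks–Morris. -/
noncomputable def extreme {K : ℕ} (v : Fin K → ℝ) (S : Finset (Fin K)) (hS : S.Nonempty) :
    Fin K → ℝ := fun i =>
  if i ∉ S then 0
  else if i = S.max' hS then v (S.min' hS) / v (S.max' hS)
  else v (S.min' hS) * (1 / v i - 1 / v (nextIn S i))

/-- A segmentation σ with label weights f is consistent with aggregate market x. -/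
def Consistent {K n : ℕ} (x : Fin K → ℝ) (f : Fin n → ℝ) (σ : Fin n → Fin K → ℝ) : Prop :=
  (∀ s, IsMarket (σ s)) ∧ ∀ k, ∑ s, f s * σ s k = x k

/-- The lower bound λ̲. -/
noncomputable def lamLow {K : ℕ} (v x : Fin K → ℝ) (istar : Fin K)
    (hIoi : (Finset.Ioi istar).Nonempty) : ℝ :=
  (Finset.Iic istar).inf' ⟨istar, Finset.mem_Iic.mpr le_rfl⟩
    (fun j => ((Finset.Ioi istar).sup' hIoi fun i => v i * barSum x i) / v j + 1 - barSum x j)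

/-- The upper bound λ̄. -/
noncomputable def lamHigh {K : ℕ} (v x : Fin K → ℝ) (istar : Fin K)
    (hIio : (Finset.Iio istar).Nonempty) : ℝ :=
  (Finset.Iio istar).sup' hIio
    (fun j => 1 - (v istar * barSum x istar - v j * barSum x j) / (v istar - v j))

/-- Consumer surplus of segmentation σ with weights f when prices p are charged. -/
def CS {K n : ℕ} (v : Fin K → ℝ) (f : Fin n → ℝ) (σ : Fin n → Fin K → ℝ)
    (p : Fin n → Fin K) : ℝ :=
  ∑ s, f s * ∑ j ∈ Finset.Ici (p s), (v j - v (p s)) * σ s j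

/-- The support of x as a finset. -/
noncomputable def suppF {K : ℕ} (x : Fin K → ℝ) : Finset (Fin K) :=
  Finset.univ.filter fun i => x i ≠ 0

/-- One step of the greedy algorithm: the next residual market. -/
noncomputable def greedyStep {K : ℕ} (v x : Fin K → ℝ) : Fin K → ℝ :=
  if h : (suppF x).Nonempty then
    if x = extreme v (suppF x) h then 0
    else
      fun i => extreme v (suppF x) h i +
        (sInf {t : ℝ | 0 ≤ t ∧ ∃ j, extreme v (suppF x) h j
            + t * (x j - extreme v (suppF x) h j) < 0})
          * (x i - extreme v (suppF x) h i)
  else 0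

/-- The residual market x^l after l steps of the greedy algorithm started at x. -/
noncomputable def resid {K : ℕ} (v x : Fin K → ℝ) : ℕ → Fin K → ℝ
  | 0 => x
  | l + 1 => greedyStep v (resid v x l)

/-- The share α of the current residual assigned to the extreme market on its support. -/
noncomputable def alphaStep {K : ℕ} (v x : Fin K → ℝ) : ℝ :=
  if h : (suppF x).Nonempty then
    if x = extreme v (suppF x) h then 1
    else 1 - 1 / sInf {t : ℝ | 0 ≤ t ∧ ∃ j, extreme v (suppF x) h j
        + t * (x j - extreme v (suppF x) h j) < 0}
  else 1

/-- The mass y(x^{S_l}) assigned by the greedy algorithm to the l-th extreme market. -/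
noncomputable def greedyMass {K : ℕ} (v x : Fin K → ℝ) (l : ℕ) : ℝ :=
  alphaStep v (resid v x l) * ∏ j ∈ Finset.range l, (1 - alphaStep v (resid v x j))

/-! The extreme market `e` on a support `S` has constant revenue `v (min S)` on `S`. Writing one
greedy step as `x = t⁻¹ x' + (1 - t⁻¹) e`, every revenue `v k * barSum x k` with `k ∈ S` is
therefore moved by the same increasing affine map, so `i*` stays the largest optimal price and `ī`
the best price above it. The objective of `λ̲` attains its minimum on the support, which turns the
same affine relation into `λ̲(x) = (1 - t⁻¹) + t⁻¹ λ̲(x')`. When the residual loses `ī`, it has no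
mass above `ī` at all (that mass would earn more than `ī`), so its `λ̲` vanishes, and unrolling
the recursion gives the partial sum of the greedy masses. -/

section Market

variable {K : ℕ} {v z : Fin K → ℝ}

@[simp]
theorem mem_suppF {i : Fin K} : i ∈ suppF z ↔ z i ≠ 0 := by
  simp [suppF]

theorem suppF_nonempty (hz : IsMarket z) : (suppF z).Nonempty := by
  obtain ⟨i, -, hi⟩ := exists_ne_zero_of_sum_ne_zero (hz.2 ▸ one_ne_zero : ∑ i, z i ≠ 0)
  exact ⟨i, mem_suppF.2 hi⟩

theorem barSum_nonneg (hz : ∀ i, 0 ≤ z i) (k : Fin K) : 0 ≤ barSum z k :=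
  sum_nonneg fun i _ => hz i

theorem barSum_le_one (hz : IsMarket z) (k : Fin K) : barSum z k ≤ 1 :=
  hz.2 ▸ sum_le_sum_of_subset_of_nonneg (subset_univ _) fun i _ _ => hz.1 i

theorem barSum_eq_add_sum_Ioi (k : Fin K) : barSum z k = z k + ∑ j ∈ Ioi k, z j := by
  rw [barSum, ← Ioi_insert, sum_insert notMem_Ioi_self]

theorem barSum_eq_of_forall_Ico_eq_zero {i j : Fin K} (hij : i ≤ j)
    (h : ∀ k ∈ Ico i j, z k = 0) : barSum z i = barSum z j := by
  refine (sum_subset (Ici_subset_Ici.2 hij) fun k hk hkj => h k ?_).symm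
  exact mem_Ico.2 ⟨mem_Ici.1 hk, not_le.1 (mt mem_Ici.2 hkj)⟩

theorem barSum_eq_add_barSum_of_forall_Ioo_eq_zero {i j : Fin K} (hij : i < j)
    (h : ∀ k ∈ Ioo i j, z k = 0) : barSum z i = z i + barSum z j := by
  rw [barSum_eq_add_sum_Ioi, barSum]
  refine congrArg _ (sum_subset (fun k hk => mem_Ioi.2 (hij.trans_le (mem_Ici.1 hk)))
    fun k hk hkj => h k ?_).symm
  exact mem_Ioo.2 ⟨mem_Ioi.1 hk, not_le.1 (mt mem_Ici.2 hkj)⟩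

theorem exists_mem_suppF_le_of_barSum_ne_zero {j : Fin K} (h : barSum z j ≠ 0) :
    ∃ l ∈ suppF z, j ≤ l := by
  obtain ⟨l, hl, hzl⟩ := exists_ne_zero_of_sum_ne_zero h
  exact ⟨l, mem_suppF.2 hzl, mem_Ici.1 hl⟩

theorem exists_mem_suppF_barSum_eq {j l : Fin K} (hjl : j ≤ l) (hl : l ∈ suppF z) :
    ∃ μ ∈ suppF z, j ≤ μ ∧ μ ≤ l ∧ barSum z j = barSum z μ := by
  have hne : ((suppF z).filter (j ≤ ·)).Nonempty := ⟨l, mem_filter.2 ⟨hl, hjl⟩⟩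
  obtain ⟨hμ, hjμ⟩ := mem_filter.1 (min'_mem _ hne)
  refine ⟨_, hμ, hjμ, min'_le _ _ (mem_filter.2 ⟨hl, hjl⟩),
    barSum_eq_of_forall_Ico_eq_zero hjμ fun k hk => ?_⟩
  obtain ⟨hjk, hkμ⟩ := mem_Ico.1 hk
  by_contra hzk
  exact (min'_le _ k (mem_filter.2 ⟨mem_suppF.2 hzk, hjk⟩)).not_gt hkμ

theorem revenue_le_of_forall_mem_suppF (hv : Monotone v) (hz : ∀ i, 0 ≤ z i) {c : ℝ}
    (hc : 0 ≤ c) {k : Fin K} (h : ∀ μ ∈ suppF z, k ≤ μ → v μ * barSum z μ ≤ c) :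
    v k * barSum z k ≤ c := by
  by_cases h0 : barSum z k = 0
  · simpa [h0] using hc
  obtain ⟨l, hl, hkl⟩ := exists_mem_suppF_le_of_barSum_ne_zero h0
  obtain ⟨μ, hμ, hkμ, -, hbar⟩ := exists_mem_suppF_barSum_eq hkl hl
  calc v k * barSum z k ≤ v μ * barSum z μ :=
        by rw [hbar]; exact mul_le_mul_of_nonneg_right (hv hkμ) (barSum_nonneg hz μ)
    _ ≤ c := h μ hμ hkμ

theorem barSum_eq_zero_of_forall_revenue_le (hv : StrictMono v) (hz : ∀ i, 0 ≤ z i)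
    {k : Fin K} (hk : z k = 0) (h : ∀ j, k < j → v j * barSum z j ≤ v k * barSum z k) :
    barSum z k = 0 := by
  by_contra h0
  obtain ⟨l, hl, hkl⟩ := exists_mem_suppF_le_of_barSum_ne_zero h0
  obtain ⟨μ, hμ, hkμ, -, hbar⟩ := exists_mem_suppF_barSum_eq hkl hl
  have hkμ' : k < μ := hkμ.lt_of_ne (by rintro rfl; exact mem_suppF.1 hμ hk)
  have hb : 0 < barSum z k := (barSum_nonneg hz k).lt_of_ne' h0
  have hle := h μ hkμ'
  rw [← hbar] at hle
  exact hle.not_gt (mul_lt_mul_of_pos_right (hv hkμ') hb)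

theorem mem_suppF_of_forall_revenue_le (hv : StrictMono v) (hz : ∀ i, 0 ≤ z i) {k : Fin K}
    (hR : 0 < v k * barSum z k) (h : ∀ j, k < j → v j * barSum z j ≤ v k * barSum z k) :
    k ∈ suppF z :=
  mem_suppF.2 fun hk => by simp [barSum_eq_zero_of_forall_revenue_le hv hz hk h] at hR

theorem LargestOptimal.revenue_lt {k j : Fin K} (h : LargestOptimal v z k) (hkj : k < j) :
    v j * barSum z j < v k * barSum z k :=
  lt_of_le_not_ge (h.1 j) fun hle => hkj.not_ge (h.2 j fun i => (h.1 i).trans hle)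

theorem LargestOptimal.mem_suppF (hv : StrictMono v) (hv0 : ∀ i, 0 ≤ v i)
    (hz : ∀ i, 0 ≤ z i) {k j : Fin K} (h : LargestOptimal v z k) (hkj : k < j) :
    k ∈ suppF z :=
  mem_suppF_of_forall_revenue_le hv hz
    ((mul_nonneg (hv0 j) (barSum_nonneg hz j)).trans_lt (h.revenue_lt hkj)) fun i _ => h.1 i

end Market

section Extreme

variable {K : ℕ} (v : Fin K → ℝ) (S : Finset (Fin K)) (hS : S.Nonempty)

theorem nextIn_spec {i : Fin K} (hi : i ∈ S) (hmax : i ≠ S.max' hS) :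
    nextIn S i ∈ S ∧ i < nextIn S i ∧ ∀ k ∈ S, i < k → nextIn S i ≤ k := by
  have hne : (S.filter (i < ·)).Nonempty :=
    ⟨S.max' hS, mem_filter.2 ⟨S.max'_mem hS, (S.le_max' i hi).lt_of_ne hmax⟩⟩
  rw [nextIn, dif_pos hne]
  obtain ⟨hmem, hlt⟩ := mem_filter.1 (min'_mem _ hne)
  exact ⟨hmem, hlt, fun k hk hik => min'_le _ k (mem_filter.2 ⟨hk, hik⟩)⟩

theorem extreme_of_notMem {i : Fin K} (hi : i ∉ S) : extreme v S hS i = 0 := by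
  simp [extreme, hi]

theorem extreme_max' : extreme v S hS (S.max' hS) = v (S.min' hS) / v (S.max' hS) := by
  simp [extreme, S.max'_mem hS]

theorem extreme_of_mem_of_ne_max' {i : Fin K} (hi : i ∈ S) (hmax : i ≠ S.max' hS) :
    extreme v S hS i = v (S.min' hS) * (1 / v i - 1 / v (nextIn S i)) := by
  simp [extreme, hi, hmax]

theorem barSum_extreme {i : Fin K} (hi : i ∈ S) :
    barSum (extreme v S hS) i = v (S.min' hS) / v i := by
  induction i using WellFoundedGT.induction with
  | _ i ih =>
  by_cases hmax : i = S.max' hS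
  · have hzero : ∀ k ∈ Ioi i, extreme v S hS k = 0 := fun k hk =>
      extreme_of_notMem v S hS fun hkS => (mem_Ioi.1 hk).not_ge (hmax ▸ S.le_max' k hkS)
    rw [barSum_eq_add_sum_Ioi, sum_eq_zero hzero, add_zero, hmax, extreme_max']
  · obtain ⟨hν, hiν, hmin⟩ := nextIn_spec S hS hi hmax
    have hzero : ∀ k ∈ Ioo i (nextIn S i), extreme v S hS k = 0 := fun k hk =>
      extreme_of_notMem v S hS fun hkS => (mem_Ioo.1 hk).2.not_ge (hmin k hkS (mem_Ioo.1 hk).1)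
    rw [barSum_eq_add_barSum_of_forall_Ioo_eq_zero hiν hzero, ih _ hiν hν,
      extreme_of_mem_of_ne_max' v S hS hi hmax]
    ring

theorem isMarket_extreme (hmono : StrictMono v) (hpos : ∀ i, 0 < v i) :
    IsMarket (extreme v S hS) := by
  refine ⟨fun i => ?_, ?_⟩
  · by_cases hi : i ∈ S
    · by_cases hmax : i = S.max' hS
      · rw [hmax, extreme_max']
        exact div_nonneg (hpos _).le (hpos _).le
      · obtain ⟨-, hiν, -⟩ := nextIn_spec S hS hi hmax
        rw [extreme_of_mem_of_ne_max' v S hS hi hmax]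
        exact mul_nonneg (hpos _).le
          (sub_nonneg.2 (one_div_le_one_div_of_le (hpos i) (hmono hiν).le))
    · exact (extreme_of_notMem v S hS hi).ge
  · have hbelow : ∑ i, extreme v S hS i = barSum (extreme v S hS) (S.min' hS) :=
      (sum_subset (subset_univ _) fun k _ hk => extreme_of_notMem v S hS fun hkS =>
        hk (mem_Ici.2 (S.min'_le k hkS))).symm
    rw [hbelow, barSum_extreme v S hS (S.min'_mem hS), div_self (hpos _).ne']

end Extreme

section Lam

variable {K : ℕ} {v z : Fin K → ℝ} {istar ibar : Fin K}

theorem lamLow_eq_inf' (hIoi : (Ioi istar).Nonempty) (hibar1 : istar < ibar)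
    (hibar2 : ∀ j, istar < j → v j * barSum z j ≤ v ibar * barSum z ibar) :
    lamLow v z istar hIoi = (Iic istar).inf' ⟨istar, mem_Iic.2 le_rfl⟩
      (fun j => v ibar * barSum z ibar / v j + 1 - barSum z j) := by
  have hsup : (Ioi istar).sup' hIoi (fun i => v i * barSum z i) = v ibar * barSum z ibar :=
    le_antisymm (sup'_le _ _ fun i hi => hibar2 i (mem_Ioi.1 hi))
      (le_sup' (fun i => v i * barSum z i) (mem_Ioi.2 hibar1))
  rw [lamLow, hsup]

theorem exists_mem_suppF_inf'_eq (hv : Monotone v) (hpos : ∀ i, 0 < v i)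
    (hz : istar ∈ suppF z) {c : ℝ} (hc : 0 ≤ c) :
    ∃ j ∈ suppF z, j ≤ istar ∧ (Iic istar).inf' ⟨istar, mem_Iic.2 le_rfl⟩
      (fun j => c / v j + 1 - barSum z j) = c / v j + 1 - barSum z j := by
  obtain ⟨j, hj, hjeq⟩ := exists_mem_eq_inf' ⟨istar, mem_Iic.2 le_rfl⟩
    (fun j => c / v j + 1 - barSum z j)
  obtain ⟨μ, hμ, hjμ, hμi, hbar⟩ := exists_mem_suppF_barSum_eq (mem_Iic.1 hj) hz
  refine ⟨μ, hμ, hμi, le_antisymm (inf'_le _ (mem_Iic.2 hμi)) ?_⟩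
  rw [hjeq, hbar]
  linarith [div_le_div_of_nonneg_left hc (hpos j) (hv hjμ)]

theorem lamLow_eq_zero (hmono : StrictMono v) (hz : IsMarket z)
    (hIoi : (Ioi istar).Nonempty) (hibar1 : istar < ibar)
    (hibar2 : ∀ j, istar < j → v j * barSum z j ≤ v ibar * barSum z ibar) (hzib : z ibar = 0) :
    lamLow v z istar hIoi = 0 := by
  have hbar : barSum z ibar = 0 :=
    barSum_eq_zero_of_forall_revenue_le hmono hz.1 hzib fun j hj => hibar2 j (hibar1.trans hj)
  rw [lamLow_eq_inf' hIoi hibar1 hibar2, hbar, mul_zero]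
  simp only [zero_div, zero_add]
  have hbot (i : Fin K) : (⟨0, istar.pos⟩ : Fin K) ≤ i := Nat.zero_le _
  have hsum : barSum z ⟨0, istar.pos⟩ = 1 := by
    rw [← hz.2, barSum, eq_univ_of_forall fun i => mem_Ici.2 (hbot i)]
  refine le_antisymm ((inf'_le _ (mem_Iic.2 (hbot istar))).trans_eq ?_)
    (le_inf' _ _ fun j _ => sub_nonneg.2 (barSum_le_one hz j))
  rw [hsum, sub_self]

end Lam

/-- `x' = e + t (x - e)` for the extreme market `e` on the support of `x`, i.e.
`x = t⁻¹ x' + (1 - t⁻¹) e`: the greedy algorithm splits off `e` with weight `1 - t⁻¹` and keeps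
the residual `x'`. -/
structure IsResidualStep {K : ℕ} (v x x' : Fin K → ℝ) (t : ℝ) : Prop where
  nonempty : (suppF x).Nonempty
  pos : 0 < t
  nonneg : ∀ k, 0 ≤ x' k
  apply_eq : ∀ k, x' k = extreme v (suppF x) nonempty k
    + t * (x k - extreme v (suppF x) nonempty k)

namespace IsResidualStep

variable {K : ℕ} {v x x' : Fin K → ℝ} {t : ℝ} (h : IsResidualStep v x x' t)
include h

theorem suppF_subset : suppF x' ⊆ suppF x := fun k hk => by
  by_contra hkx
  have hk' := h.apply_eq k
  rw [extreme_of_notMem _ _ _ hkx, not_not.1 (mt mem_suppF.2 hkx)] at hk'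
  exact mem_suppF.1 hk (by simpa using hk')

theorem isMarket (hmono : StrictMono v) (hpos : ∀ i, 0 < v i) (hx : IsMarket x) :
    IsMarket x' := by
  refine ⟨h.nonneg, ?_⟩
  simp only [h.apply_eq, sum_add_distrib, ← mul_sum, sum_sub_distrib, hx.2,
    (isMarket_extreme v _ h.nonempty hmono hpos).2, sub_self, mul_zero, add_zero]

theorem barSum_eq_of_mem {k : Fin K} (hk : k ∈ suppF x) :
    barSum x' k = v ((suppF x).min' h.nonempty) / v k
      + t * (barSum x k - v ((suppF x).min' h.nonempty) / v k) := by
  rw [← barSum_extreme v _ h.nonempty hk]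
  simp only [barSum, h.apply_eq, sum_add_distrib, ← mul_sum, sum_sub_distrib]

theorem revenue_eq (hpos : ∀ i, 0 < v i) {k : Fin K} (hk : k ∈ suppF x) :
    v k * barSum x' k = v ((suppF x).min' h.nonempty)
      + t * (v k * barSum x k - v ((suppF x).min' h.nonempty)) := by
  rw [h.barSum_eq_of_mem hk]
  field_simp [(hpos k).ne']

theorem revenue_le_iff (hpos : ∀ i, 0 < v i) {j k : Fin K} (hj : j ∈ suppF x)
    (hk : k ∈ suppF x) :
    v j * barSum x' j ≤ v k * barSum x' k ↔ v j * barSum x j ≤ v k * barSum x k := by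
  rw [h.revenue_eq hpos hj, h.revenue_eq hpos hk, add_le_add_iff_left,
    mul_le_mul_iff_of_pos_left h.pos, sub_le_sub_iff_right]

theorem revenue_lt_iff (hpos : ∀ i, 0 < v i) {j k : Fin K} (hj : j ∈ suppF x)
    (hk : k ∈ suppF x) :
    v j * barSum x' j < v k * barSum x' k ↔ v j * barSum x j < v k * barSum x k := by
  rw [h.revenue_eq hpos hj, h.revenue_eq hpos hk, add_lt_add_iff_left,
    mul_lt_mul_iff_of_pos_left h.pos, sub_lt_sub_iff_right]

theorem forall_revenue_le (hmono : StrictMono v) (hpos : ∀ i, 0 < v i) {k i : Fin K}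
    (hi : i ∈ suppF x) (hmax : ∀ j, k < j → v j * barSum x j ≤ v i * barSum x i) :
    ∀ j, k < j → v j * barSum x' j ≤ v i * barSum x' i := fun _ hkj =>
  revenue_le_of_forall_mem_suppF hmono.monotone h.nonneg
    (mul_nonneg (hpos i).le (barSum_nonneg h.nonneg i)) fun μ hμ hjμ =>
      (h.revenue_le_iff hpos (h.suppF_subset hμ) hi).2 (hmax μ (hkj.trans_le hjμ))

theorem optimalPrice (hmono : StrictMono v) (hpos : ∀ i, 0 < v i) {i : Fin K}
    (hi : i ∈ suppF x) (hopt : OptimalPrice v x i) : OptimalPrice v x' i := fun _ =>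
  revenue_le_of_forall_mem_suppF hmono.monotone h.nonneg
    (mul_nonneg (hpos i).le (barSum_nonneg h.nonneg i)) fun μ hμ _ =>
      (h.revenue_le_iff hpos (h.suppF_subset hμ) hi).2 (hopt μ)

theorem largestOptimal (hmono : StrictMono v) (hpos : ∀ i, 0 < v i) (hx : ∀ k, 0 ≤ x k)
    {i j : Fin K} (histar : LargestOptimal v x i) (hij : i < j) (hj : j ∈ suppF x) :
    LargestOptimal v x' i := by
  have hi := histar.mem_suppF hmono (fun k => (hpos k).le) hx hij
  have hR : 0 < v i * barSum x' i :=
    (mul_nonneg (hpos j).le (barSum_nonneg h.nonneg j)).trans_lt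
      ((h.revenue_lt_iff hpos hj hi).2 (histar.revenue_lt hij))
  refine ⟨h.optimalPrice hmono hpos hi histar.1, fun k hk => le_of_not_gt fun hik => ?_⟩
  have hk' : k ∈ suppF x' :=
    mem_suppF_of_forall_revenue_le hmono h.nonneg (hR.trans_le (hk i)) fun l _ => hk l
  exact (histar.revenue_lt hik).not_ge ((h.revenue_le_iff hpos hi (h.suppF_subset hk')).1 (hk i))

theorem lamLow_eq (hmono : StrictMono v) (hpos : ∀ i, 0 < v i) (hx : ∀ k, 0 ≤ x k)
    {istar ibar : Fin K} (hIoi : (Ioi istar).Nonempty) (histar : LargestOptimal v x istar)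
    (hibar1 : istar < ibar) (hibS : ibar ∈ suppF x)
    (hibar2 : ∀ j, istar < j → v j * barSum x j ≤ v ibar * barSum x ibar) :
    lamLow v x istar hIoi = (1 - 1 / t) + 1 / t * lamLow v x' istar hIoi := by
  have hiS := histar.mem_suppF hmono (fun k => (hpos k).le) hx hibar1
  have hiS' := (h.largestOptimal hmono hpos hx histar hibar1 hibS).mem_suppF hmono
    (fun k => (hpos k).le) h.nonneg hibar1
  have key : ∀ j ∈ suppF x, v ibar * barSum x ibar / v j + 1 - barSum x j
      = (1 - 1 / t) + 1 / t * (v ibar * barSum x' ibar / v j + 1 - barSum x' j) := by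
    intro j hj
    rw [h.revenue_eq hpos hibS, h.barSum_eq_of_mem hj]
    field_simp [(hpos j).ne', h.pos.ne']
    ring
  rw [lamLow_eq_inf' hIoi hibar1 hibar2,
    lamLow_eq_inf' hIoi hibar1 (h.forall_revenue_le hmono hpos hibS hibar2)]
  obtain ⟨j, hj, hji, hjeq⟩ := exists_mem_suppF_inf'_eq hmono.monotone hpos hiS
    (mul_nonneg (hpos ibar).le (barSum_nonneg hx ibar))
  obtain ⟨j', hj', hj'i, hj'eq⟩ := exists_mem_suppF_inf'_eq hmono.monotone hpos hiS'
    (mul_nonneg (hpos ibar).le (barSum_nonneg h.nonneg ibar))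
  refine le_antisymm ?_ ?_
  · rw [hj'eq, ← key j' (h.suppF_subset hj')]
    exact inf'_le _ (mem_Iic.2 hj'i)
  · rw [hjeq, key j hj]
    gcongr
    · exact one_div_nonneg.2 h.pos.le
    · exact inf'_le _ (mem_Iic.2 hji)

end IsResidualStep

section Greedy

variable {K : ℕ} {v x : Fin K → ℝ}

theorem setOf_exists_add_mul_sub_neg_eq_Ioi {ι : Type*} [Fintype ι] {e y : ι → ℝ}
    (he : ∀ i, 0 ≤ e i) (hD : (univ.filter fun i => y i < e i).Nonempty) :
    {t : ℝ | 0 ≤ t ∧ ∃ i, e i + t * (y i - e i) < 0}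
      = Set.Ioi ((univ.filter fun i => y i < e i).inf' hD fun i => e i / (e i - y i)) := by
  ext t
  simp only [Set.mem_ofPred_eq, Set.mem_Ioi, inf'_lt_iff, mem_filter, mem_univ, true_and]
  constructor
  · rintro ⟨ht, i, hi⟩
    have hlt : y i < e i := by
      by_contra! hle
      nlinarith [he i]
    exact ⟨i, hlt, by rw [div_lt_iff₀ (sub_pos.2 hlt)]; linarith⟩
  · rintro ⟨i, hlt, hi⟩
    rw [div_lt_iff₀ (sub_pos.2 hlt)] at hi
    exact ⟨by nlinarith [he i], i, by linarith⟩

theorem exists_isResidualStep_greedyStep (hmono : StrictMono v) (hpos : ∀ i, 0 < v i)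
    (hx : IsMarket x) (hS : (suppF x).Nonempty) (hext : x ≠ extreme v (suppF x) hS) :
    ∃ t, IsResidualStep v x (greedyStep v x) t ∧ alphaStep v x = 1 - 1 / t := by
  have he := isMarket_extreme v (suppF x) hS hmono hpos
  have hD : (univ.filter fun i => x i < extreme v (suppF x) hS i).Nonempty := by
    by_contra hD
    have hle (i : Fin K) : extreme v (suppF x) hS i ≤ x i :=
      not_lt.1 fun hi => hD ⟨i, mem_filter.2 ⟨mem_univ i, hi⟩⟩
    have hsum := (sum_eq_sum_iff_of_le fun i _ => hle i).1 (he.2.trans hx.2.symm)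
    exact hext (funext fun i => (hsum i (mem_univ i)).symm)
  have hset := setOf_exists_add_mul_sub_neg_eq_Ioi he.1 hD
  set t := (univ.filter fun i => x i < extreme v (suppF x) hS i).inf' hD
    fun i => extreme v (suppF x) hS i / (extreme v (suppF x) hS i - x i)
  have ht : 0 < t := (lt_inf'_iff hD).2 fun i hi =>
    have hlt := (mem_filter.1 hi).2
    div_pos ((hx.1 i).trans_lt hlt) (sub_pos.2 hlt)
  have hstep : greedyStep v x = fun k => extreme v (suppF x) hS k
      + t * (x k - extreme v (suppF x) hS k) := by
    rw [greedyStep, dif_pos hS, if_neg hext, hset, csInf_Ioi]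
  refine ⟨t, ⟨hS, ht, fun k => ?_, fun k => by rw [hstep]⟩, ?_⟩
  · by_contra! hk
    have hmem : t ∈ Set.Ioi t := hset ▸ ⟨ht.le, k, by rwa [hstep] at hk⟩
    exact lt_irrefl t hmem
  · rw [alphaStep, dif_pos hS, if_neg hext, hset, csInf_Ioi]

theorem alphaStep_of_eq_extreme (hS : (suppF x).Nonempty) (hext : x = extreme v (suppF x) hS) :
    alphaStep v x = 1 := by
  rw [alphaStep, dif_pos hS, if_pos hext]

theorem lamLow_of_eq_extreme (hmono : StrictMono v) (hpos : ∀ i, 0 < v i) (hx : IsMarket x)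
    (hS : (suppF x).Nonempty) (hext : x = extreme v (suppF x) hS) {istar ibar : Fin K}
    (hIoi : (Ioi istar).Nonempty) (histar : LargestOptimal v x istar) (hibar1 : istar < ibar)
    (hibS : ibar ∈ suppF x)
    (hibar2 : ∀ j, istar < j → v j * barSum x j ≤ v ibar * barSum x ibar) :
    lamLow v x istar hIoi = 1 := by
  have hbar : ∀ j ∈ suppF x, barSum x j = v ((suppF x).min' hS) / v j := fun j hj => by
    have hext' := barSum_extreme v (suppF x) hS hj
    rwa [← hext] at hext'
  obtain ⟨j, hj, -, hjeq⟩ := exists_mem_suppF_inf'_eq hmono.monotone hpos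
    (histar.mem_suppF hmono (fun k => (hpos k).le) hx.1 hibar1)
    (mul_nonneg (hpos ibar).le (barSum_nonneg hx.1 ibar))
  rw [lamLow_eq_inf' hIoi hibar1 hibar2, hjeq, hbar ibar hibS, hbar j hj]
  field_simp [(hpos ibar).ne', (hpos j).ne']
  ring

theorem resid_succ' (v x : Fin K → ℝ) (l : ℕ) :
    resid v x (l + 1) = resid v (greedyStep v x) l := by
  induction l with
  | zero => rfl
  | succ l ih => exact congrArg (greedyStep v) ih

theorem greedyMass_zero (v x : Fin K → ℝ) : greedyMass v x 0 = alphaStep v x := by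
  rw [greedyMass, prod_range_zero, mul_one]
  rfl

theorem greedyMass_succ (v x : Fin K → ℝ) (l : ℕ) :
    greedyMass v x (l + 1) = (1 - alphaStep v x) * greedyMass v (greedyStep v x) l := by
  simp only [greedyMass, prod_range_succ', resid_succ']
  rw [show resid v x 0 = x from rfl]
  ring

theorem sum_range_succ_greedyMass (v x : Fin K → ℝ) (T : ℕ) :
    ∑ j ∈ range (T + 1), greedyMass v x j
      = alphaStep v x
        + (1 - alphaStep v x) * ∑ j ∈ range T, greedyMass v (greedyStep v x) j := by
  rw [sum_range_succ', mul_sum, greedyMass_zero, add_comm]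
  simp only [greedyMass_succ]

end Greedy

theorem greedy_mass_eq_lamLow_general {K : ℕ} (v : Fin K → ℝ) (hmono : StrictMono v)
    (hpos : ∀ i, 0 < v i) (x : Fin K → ℝ) (hx : IsMarket x)
    (istar : Fin K) (histar : LargestOptimal v x istar)
    (hIoi : (Finset.Ioi istar).Nonempty)
    (ibar : Fin K) (hibar1 : istar < ibar)
    (hibar2 : ∀ j, istar < j → v j * barSum x j ≤ v ibar * barSum x ibar)
    (T : ℕ) (hT : resid v x T ibar = 0)
    (hTfirst : ∀ l < T, resid v x l ibar ≠ 0) :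
    ∑ j ∈ Finset.range T, greedyMass v x j = lamLow v x istar hIoi := by
  induction T generalizing x with
  | zero => rw [sum_range_zero, lamLow_eq_zero hmono hx hIoi hibar1 hibar2 hT]
  | succ T ih =>
    have hS := suppF_nonempty hx
    have hibS : ibar ∈ suppF x := mem_suppF.2 (hTfirst 0 T.succ_pos)
    rw [sum_range_succ_greedyMass]
    by_cases hext : x = extreme v (suppF x) hS
    · rw [alphaStep_of_eq_extreme hS hext,
        lamLow_of_eq_extreme hmono hpos hx hS hext hIoi histar hibar1 hibS hibar2]
      ring
    obtain ⟨t, hstep, hα⟩ := exists_isResidualStep_greedyStep hmono hpos hx hS hext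
    rw [hα, hstep.lamLow_eq hmono hpos hx.1 hIoi histar hibar1 hibS hibar2, sub_sub_cancel,
      ih _ (hstep.isMarket hmono hpos hx) (hstep.largestOptimal hmono hpos hx.1 histar hibar1 hibS)
        (hstep.forall_revenue_le hmono hpos hibS hibar2) (by rwa [← resid_succ'])
        fun l hl => by rw [← resid_succ']; exact hTfirst (l + 1) (by omega)]

/-- the total mass assigned by the greedy algorithm to the extreme markets
containing v_ī (those before the first step T at which the residual mass at ī vanishes)
equals λ̲. -/
theorem greedy_mass_eq_lamLow {K : ℕ} (v : Fin K → ℝ) (hmono : StrictMono v)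
    (hpos : ∀ i, 0 < v i) (x : Fin K → ℝ) (hx : IsMarket x)
    (istar : Fin K) (histar : LargestOptimal v x istar)
    (hIoi : (Finset.Ioi istar).Nonempty)
    (ibar : Fin K) (hibar1 : istar < ibar)
    (hibar2 : ∀ j, istar < j → v j * barSum x j ≤ v ibar * barSum x ibar)
    (hibar3 : ∀ j, istar < j → v j * barSum x j = v ibar * barSum x ibar → j ≤ ibar)
    (T : ℕ) (hT0 : 0 < T) (hT : resid v x T ibar = 0)
    (hTfirst : ∀ l < T, resid v x l ibar ≠ 0) :
    ∑ j ∈ Finset.range T, greedyMass v x j = lamLow v x istar hIoi :=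
  greedy_mass_eq_lamLow_general v hmono hpos x hx istar histar hIoi ibar hibar1 hibar2 T hT hTfirst
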